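/- Let L₂ be the Laplacian of a directed graph on N nodes that contains a spanning tree with root r, and let G = diag(g_i) with g_i ≥ 0 and g_r > 0. Then every eigenvalue of L₂ + G has positive real part; in particular L₂ + G is nonsingular. -/

import Mathlib

open Matrix

/-- for a directed graph containing a spanning tree rooted at `r` and a
nonnegative diagonal pinning matrix `G` with `g r > 0`, every eigenvalue of `L₂ + G`
has positive real part; in particular `L₂ + G` is nonsingular. -/
theorem stmt14 {N : ℕ} (a : Fin N → Fin N → ℝ) (ha : ∀ i j, a i j = 0 ∨ a i j = 1)
    (g : Fin N → ℝ) (hg : ∀ i, 0 ≤ g i) (r : Fin N) (hgr : 0 < g r)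
    (hreach : ∀ i, Relation.ReflTransGen (fun x y => a y x = 1) r i) :
    (∀ μ ∈ spectrum ℂ
        (((Matrix.diagonal fun i => ∑ j, a i j) - Matrix.of a
          + Matrix.diagonal g).map (algebraMap ℝ ℂ)), 0 < μ.re) ∧
      IsUnit ((Matrix.diagonal fun i => ∑ j, a i j) - Matrix.of a
        + Matrix.diagonal g).det := by
  set d : Fin N → ℝ := fun i => ∑ j, a i j with hd
  set M : Matrix (Fin N) (Fin N) ℝ :=
    Matrix.diagonal d - Matrix.of a + Matrix.diagonal g with hM
  have ha0 : ∀ i j, 0 ≤ a i j := fun i j => by rcases ha i j with h | h <;> simp [h]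
  have main : ∀ μ ∈ spectrum ℂ (M.map (algebraMap ℝ ℂ)), 0 < μ.re := by
    intro μ hμ
    by_contra hle
    push_neg at hle
    rw [spectrum.mem_iff] at hμ
    have hdet : ((algebraMap ℂ (Matrix (Fin N) (Fin N) ℂ)) μ
        - M.map (algebraMap ℝ ℂ)).det = 0 := by
      by_contra h
      exact hμ ((Matrix.isUnit_iff_isUnit_det _).mpr (isUnit_iff_ne_zero.mpr h))
    obtain ⟨v, hv0, hv⟩ := Matrix.exists_mulVec_eq_zero_iff.mpr hdet
    -- row equation
    have hrow : ∀ i, ((d i : ℂ) + g i - μ) * v i = ∑ j, (a i j : ℂ) * v j := by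
      intro i
      have h := congrFun hv i
      simp only [Matrix.mulVec, dotProduct, Matrix.sub_apply, Matrix.map_apply,
        Matrix.add_apply, Matrix.diagonal_apply, Matrix.algebraMap_matrix_apply,
        Matrix.of_apply, Pi.zero_apply, hM, Complex.coe_algebraMap,
        Algebra.algebraMap_self_apply] at h
      have h2 : ∀ j : Fin N,
          ((if i = j then μ else 0)
            - (((if i = j then d i else 0) - a i j
              + if i = j then g i else 0 : ℝ) : ℂ)) * v j
          = (if i = j then (μ - (d i : ℂ) - g i) * v j else 0) + (a i j : ℂ) * v j := by
        intro j
        split <;> · push_cast; ring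
      rw [Finset.sum_congr rfl (fun j _ => h2 j), Finset.sum_add_distrib,
        Finset.sum_ite_eq] at h
      simp only [Finset.mem_univ, if_true] at h
      linear_combination -h
    -- pick a maximizing index
    have hne : (Finset.univ : Finset (Fin N)).Nonempty := ⟨r, Finset.mem_univ r⟩
    obtain ⟨i0, -, hmax⟩ := Finset.exists_max_image Finset.univ (fun j => ‖v j‖) hne
    set m : ℝ := ‖v i0‖ with hmdef
    have hmax' : ∀ j, ‖v j‖ ≤ m := fun j => hmax j (Finset.mem_univ j)
    have hm : 0 < m := by
      by_contra h
      push_neg at h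
      apply hv0
      funext j
      have h1 : ‖v j‖ ≤ 0 := le_trans (hmax' j) h
      simpa using norm_le_zero_iff.mp h1
    -- key propagation lemma
    have key : ∀ i, ‖v i‖ = m → g i = 0 ∧ ∀ j, a i j = 1 → ‖v j‖ = m := by
      intro i hi
      have hterm : ∀ j, ‖(a i j : ℂ) * v j‖ = a i j * ‖v j‖ := by
        intro j
        rw [norm_mul, Complex.norm_real, Real.norm_eq_abs, abs_of_nonneg (ha0 i j)]
      have h1 : ‖((d i : ℂ) + g i - μ)‖ * m = ‖∑ j, (a i j : ℂ) * v j‖ := by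
        rw [← hi, ← norm_mul, hrow i]
      have h2 : ‖∑ j, (a i j : ℂ) * v j‖ ≤ ∑ j, a i j * ‖v j‖ := by
        refine le_trans (norm_sum_le _ _) (le_of_eq ?_)
        exact Finset.sum_congr rfl fun j _ => hterm j
      have h3 : ∑ j, a i j * ‖v j‖ ≤ d i * m := by
        rw [hd, Finset.sum_mul]
        exact Finset.sum_le_sum fun j _ => mul_le_mul_of_nonneg_left (hmax' j) (ha0 i j)
      have h4 : d i + g i ≤ ‖((d i : ℂ) + g i - μ)‖ := by
        have hre : ((d i : ℂ) + g i - μ).re = d i + g i - μ.re := by simp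
        have := Complex.re_le_norm ((d i : ℂ) + g i - μ)
        rw [hre] at this
        linarith
      have hchain : (d i + g i) * m ≤ d i * m := by
        calc (d i + g i) * m ≤ ‖((d i : ℂ) + g i - μ)‖ * m :=
              mul_le_mul_of_nonneg_right h4 hm.le
          _ = ‖∑ j, (a i j : ℂ) * v j‖ := h1
          _ ≤ ∑ j, a i j * ‖v j‖ := h2
          _ ≤ d i * m := h3
      have hgi : g i = 0 := by
        have : g i * m ≤ 0 := by nlinarith
        have hgi' : g i ≤ 0 := by
          by_contra h
          push_neg at h
          nlinarith
        exact le_antisymm hgi' (hg i)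
      refine ⟨hgi, ?_⟩
      have hlow : d i * m ≤ ∑ j, a i j * ‖v j‖ := by
        calc d i * m = (d i + g i) * m := by rw [hgi]; ring
          _ ≤ ‖((d i : ℂ) + g i - μ)‖ * m := mul_le_mul_of_nonneg_right h4 hm.le
          _ = ‖∑ j, (a i j : ℂ) * v j‖ := h1
          _ ≤ ∑ j, a i j * ‖v j‖ := h2
      have hsumeq : ∑ j, a i j * ‖v j‖ = ∑ j, a i j * m := by
        have : ∑ j, a i j * m = d i * m := by rw [hd, Finset.sum_mul]
        rw [this]
        exact le_antisymm h3 hlow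
      have heach := (Finset.sum_eq_sum_iff_of_le
        (fun j (_ : j ∈ Finset.univ) =>
          mul_le_mul_of_nonneg_left (hmax' j) (ha0 i j))).mp hsumeq
      intro j haj
      have := heach j (Finset.mem_univ j)
      rw [haj, one_mul, one_mul] at this
      exact this
    -- propagate back to the root
    have prop : ∀ i, Relation.ReflTransGen (fun x y => a y x = 1) r i →
        ‖v i‖ = m → ‖v r‖ = m := by
      intro i h
      induction h with
      | refl => exact fun h => h
      | tail hb hbc ih => exact fun hc => ih ((key _ hc).2 _ hbc)
    have hr : ‖v r‖ = m := prop i0 (hreach i0) rfl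
    have := (key r hr).1
    linarith
  refine ⟨main, ?_⟩
  rw [isUnit_iff_ne_zero]
  intro h0
  have hmem : (0 : ℂ) ∈ spectrum ℂ (M.map (algebraMap ℝ ℂ)) := by
    rw [spectrum.mem_iff]
    intro hu
    rw [Matrix.isUnit_iff_isUnit_det] at hu
    have hdc : (M.map (algebraMap ℝ ℂ)).det = 0 := by
      have := (RingHom.map_det (algebraMap ℝ ℂ) M).symm
      rw [RingHom.mapMatrix_apply] at this
      rw [this, h0, map_zero]
    rw [map_zero, zero_sub, Matrix.det_neg, hdc, mul_zero] at hu
    exact absurd (isUnit_zero_iff.mp hu) (by norm_num)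
  have := main 0 hmem
  simp at this
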